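/- arXiv:math/0602446 — 6 statements merged into one kernel-verified Lean document; each statement's English description precedes it below -/
import Mathlib

section
/- Let A_n, B_n be subgroups of finite groups C_n (n ∈ ℕ) with C_n = ⟨A_n, B_n⟩ for every n. Suppose X is a frame subgroup of ∏_{n=1}^∞ A_n and Y is a frame subgroup of ∏_{n=1}^∞ B_n; regard X and Y as subgroups of ∏_{n=1}^∞ C_n via the coordinatewise inclusions. Then the subgroup Z = ⟨X, Y⟩ of ∏_{n=1}^∞ C_n is a frame for ∏_{n=1}^∞ C_n. -/
/-- A subgroup `G` of a Cartesian product `∏ i, S i` of finite groups is a *frame* if it is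
finitely generated, contains the restricted direct sum (all elements with finite support),
and every finite-index subgroup of `G` contains a principal congruence subgroup
`G ∩ ker(∏ i, S i → ∏ i ∈ V, S i)` for some finite set `V` of indices. -/
def IsFrame {ι : Type*} {S : ι → Type*} [∀ i, Group (S i)]
    (G : Subgroup (∀ i, S i)) : Prop :=
  G.FG ∧
  (∀ x : ∀ i, S i, {i | x i ≠ 1}.Finite → x ∈ G) ∧
  (∀ H : Subgroup G, H.FiniteIndex →
    ∃ V : Finset ι, ∀ g : G, (∀ i ∈ V, (g : ∀ i, S i) i = 1) → g ∈ H)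

/-- The coordinatewise inclusion `∏ n, A n →* ∏ n, C n` of a Cartesian product of subgroups
`A n ≤ C n` into the Cartesian product of the ambient groups. -/
def coordInclusion {C : ℕ → Type*} [∀ n, Group (C n)] (A : ∀ n, Subgroup (C n)) :
    (∀ n, A n) →* ∀ n, C n :=
  Pi.monoidHom fun n => (A n).subtype.comp (Pi.evalMonoidHom (fun n => A n) n)


/-! Since `C n = ⟨A n, B n⟩`, the single-coordinate copies of every `C n` lie in `Z`, hence so
does the restricted direct sum. For a finite-index `H ≤ Z`, pull `H` back to `X` and `Y` and let
`V` be the union of the two finite sets of coordinates their frame properties provide. Erasing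
the coordinates in `V` differs from the identity by a finitely supported factor, so it maps `X`
and `Y`, and therefore all of `Z`, into `H`; and it fixes every element that is trivial on `V`. -/

theorem Subgroup.FG.map {G N : Type*} [Group G] [Group N] {P : Subgroup G} (hP : P.FG)
    (f : G →* N) : (P.map f).FG := by
  classical
  obtain ⟨S, rfl⟩ := hP
  exact ⟨S.image f, by rw [Finset.coe_image, MonoidHom.map_closure]⟩

instance Subgroup.finiteIndex_comap {G N : Type*} [Group G] [Group N] (H : Subgroup N)
    [H.FiniteIndex] (f : G →* N) : (H.comap f).FiniteIndex :=
  ⟨by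
    rw [Subgroup.index_comap]
    exact (H.isFiniteRelIndex_of_finiteIndex (K := f.range)).relIndex_ne_zero⟩

section Pi

variable {ι : Type*} [DecidableEq ι] {S : ι → Type*} [∀ i, Group (S i)]

def Pi.eraseMonoidHom (V : Finset ι) : (∀ i, S i) →* ∀ i, S i where
  toFun x i := if i ∈ V then 1 else x i
  map_one' := funext fun i => by simp
  map_mul' x y := funext fun i => by by_cases hi : i ∈ V <;> simp [hi]

theorem Pi.eraseMonoidHom_apply (V : Finset ι) (x : ∀ i, S i) (i : ι) :
    Pi.eraseMonoidHom V x i = if i ∈ V then 1 else x i := rfl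

theorem Pi.eraseMonoidHom_eq_self {V : Finset ι} {x : ∀ i, S i} (hx : ∀ i ∈ V, x i = 1) :
    Pi.eraseMonoidHom V x = x :=
  funext fun i => by by_cases hi : i ∈ V <;> simp [Pi.eraseMonoidHom_apply, hi, hx]

theorem IsFrame.exists_map_eraseMonoidHom_le {G : Subgroup (∀ i, S i)} (hG : IsFrame G)
    (H : Subgroup G) [H.FiniteIndex] :
    ∃ V : Finset ι, ∀ W, V ⊆ W → G.map (Pi.eraseMonoidHom W) ≤ H.map G.subtype := by
  obtain ⟨V, hV⟩ := hG.2.2 H inferInstance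
  refine ⟨V, fun W hVW => ?_⟩
  rintro _ ⟨x, hx, rfl⟩
  set e := Pi.eraseMonoidHom W x
  -- `x * e⁻¹` is `x` restricted to `W`, hence finitely supported
  have hxe : x * e⁻¹ ∈ G := hG.2.1 _ <| W.finite_toSet.subset fun i hi => by
    by_contra hiW
    rw [Finset.mem_coe] at hiW
    simp [e, Pi.eraseMonoidHom_apply, hiW] at hi
  have he : e ∈ G := by simpa using G.mul_mem (G.inv_mem hxe) hx
  refine ⟨⟨e, he⟩, hV _ fun i hi => by simp [e, Pi.eraseMonoidHom_apply, hVW hi], rfl⟩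

theorem Subgroup.mem_of_map_eraseMonoidHom_le {G : Subgroup (∀ i, S i)} {H : Subgroup G}
    {V : Finset ι} (hGH : G.map (Pi.eraseMonoidHom V) ≤ H.map G.subtype) (g : G)
    (hg : ∀ i ∈ V, (g : ∀ i, S i) i = 1) : g ∈ H :=
  (Subgroup.mem_map_iff_mem G.subtype_injective).mp (hGH ⟨g, g.2, Pi.eraseMonoidHom_eq_self hg⟩)

end Pi

section CoordInclusion

variable {C : ℕ → Type*} [∀ n, Group (C n)] {A : ∀ n, Subgroup (C n)}

theorem coordInclusion_apply (x : ∀ n, A n) (i : ℕ) : coordInclusion A x i = x i := rfl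

theorem coordInclusion_mulSingle (n : ℕ) (a : A n) :
    coordInclusion A (Pi.mulSingle n a) = Pi.mulSingle n (a : C n) :=
  funext <| Pi.apply_mulSingle (fun i (a : A i) => (a : C i)) (fun _ => rfl) n a

theorem eraseMonoidHom_comp_coordInclusion (V : Finset ℕ) :
    (Pi.eraseMonoidHom V).comp (coordInclusion A) =
      (coordInclusion A).comp (Pi.eraseMonoidHom V) :=
  MonoidHom.ext fun x => funext fun i => by
    by_cases hi : i ∈ V <;> simp [Pi.eraseMonoidHom_apply, coordInclusion_apply, hi]

theorem le_comap_mulSingle_of_map_coordInclusion_le {X : Subgroup (∀ n, A n)}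
    (hX : ∀ x : ∀ n, A n, {n | x n ≠ 1}.Finite → x ∈ X) {Z : Subgroup (∀ n, C n)}
    (hXZ : X.map (coordInclusion A) ≤ Z) (n : ℕ) :
    A n ≤ Z.comap (MonoidHom.mulSingle C n) := fun a ha => by
  refine hXZ ⟨Pi.mulSingle n ⟨a, ha⟩, hX _ ((Set.finite_singleton n).subset fun i hi => ?_),
    coordInclusion_mulSingle n _⟩
  by_contra hin
  exact hi (Pi.mulSingle_eq_of_ne hin _)

theorem IsFrame.exists_map_eraseMonoidHom_map_coordInclusion_le {X : Subgroup (∀ n, A n)}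
    (hX : IsFrame X) {Z : Subgroup (∀ n, C n)} (hXZ : X.map (coordInclusion A) ≤ Z)
    (H : Subgroup Z) [H.FiniteIndex] :
    ∃ V : Finset ℕ, ∀ W, V ⊆ W →
      (X.map (coordInclusion A)).map (Pi.eraseMonoidHom W) ≤ H.map Z.subtype := by
  let f : X →* Z := (Subgroup.inclusion hXZ).comp ((coordInclusion A).subgroupMap X)
  obtain ⟨V, hV⟩ := hX.exists_map_eraseMonoidHom_le (H.comap f)
  refine ⟨V, fun W hVW => ?_⟩
  calc (X.map (coordInclusion A)).map (Pi.eraseMonoidHom W)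
      = (X.map (Pi.eraseMonoidHom W)).map (coordInclusion A) := by
        rw [Subgroup.map_map, Subgroup.map_map, eraseMonoidHom_comp_coordInclusion]
    _ ≤ ((H.comap f).map X.subtype).map (coordInclusion A) := Subgroup.map_mono (hV W hVW)
    _ = ((H.comap f).map f).map Z.subtype := by
        rw [Subgroup.map_map, Subgroup.map_map]; rfl
    _ ≤ H.map Z.subtype := Subgroup.map_mono (Subgroup.map_comap_le _ _)

end CoordInclusion

theorem join_of_frames_is_frame_general
    (C : ℕ → Type) [∀ n, Group (C n)]
    (A B : ∀ n, Subgroup (C n)) (hgen : ∀ n, A n ⊔ B n = ⊤)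
    (X : Subgroup (∀ n, A n)) (Y : Subgroup (∀ n, B n))
    (hX : IsFrame X) (hY : IsFrame Y) :
    IsFrame (X.map (coordInclusion A) ⊔ Y.map (coordInclusion B)) := by
  set Z := X.map (coordInclusion A) ⊔ Y.map (coordInclusion B)
  refine ⟨(hX.1.map _).sup (hY.1.map _), fun x hx => ?_, fun H _ => ?_⟩
  · have hsingle (n : ℕ) : ⊤ ≤ Z.comap (MonoidHom.mulSingle C n) := hgen n ▸ sup_le
      (le_comap_mulSingle_of_map_coordInclusion_le hX.2.1 le_sup_left n)
      (le_comap_mulSingle_of_map_coordInclusion_le hY.2.1 le_sup_right n)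
    exact Submonoid.pi_mem_of_mulSingle_mem_aux hx.toFinset x (by simp)
      fun n _ => hsingle n trivial
  · obtain ⟨VX, hVX⟩ := hX.exists_map_eraseMonoidHom_map_coordInclusion_le le_sup_left H
    obtain ⟨VY, hVY⟩ := hY.exists_map_eraseMonoidHom_map_coordInclusion_le le_sup_right H
    refine ⟨VX ∪ VY, Subgroup.mem_of_map_eraseMonoidHom_le ?_⟩
    rw [Subgroup.map_sup]
    exact sup_le (hVX _ Finset.subset_union_left) (hVY _ Finset.subset_union_right)

/-- **Lemma (Kassabov–Nikolov).**  Let `A n, B n ≤ C n` be finite groups with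
`C n = ⟨A n, B n⟩` for all `n`.  If `X` is a frame subgroup of `∏ n, A n` and `Y` is a frame
subgroup of `∏ n, B n`, both regarded as subgroups of `∏ n, C n` via the coordinatewise
inclusions, then `Z = ⟨X, Y⟩` is a frame for `∏ n, C n`. -/
theorem join_of_frames_is_frame
    (C : ℕ → Type) [∀ n, Group (C n)] [∀ n, Finite (C n)]
    (A B : ∀ n, Subgroup (C n)) (hgen : ∀ n, A n ⊔ B n = ⊤)
    (X : Subgroup (∀ n, A n)) (Y : Subgroup (∀ n, B n))
    (hX : IsFrame X) (hY : IsFrame Y) :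
    IsFrame (X.map (coordInclusion A) ⊔ Y.map (coordInclusion B)) :=
  join_of_frames_is_frame_general C A B hgen X Y hX hY
end

section
/- Let S be a nonabelian finite simple group and let c, m be positive integers with m ≤ |Aut(S)|^c. Then there exist c + 1 injective homomorphisms f_1, …, f_{c+1} : S → S^m such that S^m = ⟨f_1(S), …, f_{c+1}(S)⟩. -/
/-!
Pick distinct tuples `τ_1, …, τ_m ∈ Aut(S)^c`, let `f_0` be the diagonal embedding and
`f_ℓ(s) = (τ_1ℓ(s), …, τ_mℓ(s))`. Let `H` be the subgroup they generate and, for `i ∉ T`, let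
`N_T(i) = H.coordOfTrivialOn T i` be the group of `i`-th coordinates of the elements of `H`
trivial on `T`. The diagonal makes `N_T(i)` normal, and for `i ≠ j` a level `ℓ` with
`τ_iℓ ≠ τ_jℓ` gives an element of `f_ℓ(S) f_0(S)` trivial at `j` but not at `i`, so
`N_{j}(i) = S` by simplicity. Commutators of elements trivial on `T` and on `U` are trivial on
`T ∪ U`, and `S` is perfect, so `N_T(i) = S` for all `T ∌ i` by induction on `T`; with
`T = {i}ᶜ` this puts every factor of `S^m` into `H`.
-/

open Subgroup

variable {ι S : Type*} [Group S]

theorem IsSimpleGroup.commutator_eq_top (hS : IsSimpleGroup S)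
    (hna : ¬∀ a b : S, a * b = b * a) : commutator S = ⊤ := by
  refine (hS.eq_bot_or_eq_top_of_normal _ inferInstance).resolve_left fun h => hna fun a b => ?_
  exact ((commutator_eq_bot_iff S).mp h).is_comm.comm a b

namespace Subgroup

def coordOfTrivialOn (H : Subgroup (ι → S)) (T : Set ι) (i : ι) : Subgroup S :=
  (H ⊓ pi T fun _ => ⊥).map (Pi.evalMonoidHom (fun _ => S) i)

variable {H : Subgroup (ι → S)} {T U : Set ι} {i : ι}

theorem mem_coordOfTrivialOn {s : S} :
    s ∈ H.coordOfTrivialOn T i ↔ ∃ x ∈ H, (∀ k ∈ T, x k = 1) ∧ x i = s := by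
  simp [coordOfTrivialOn, mem_pi, and_assoc]

theorem commutator_coordOfTrivialOn_le :
    ⁅H.coordOfTrivialOn T i, H.coordOfTrivialOn U i⁆ ≤ H.coordOfTrivialOn (T ∪ U) i := by
  simp only [commutator_le, mem_coordOfTrivialOn]
  rintro - ⟨x, hx, hxT, rfl⟩ - ⟨y, hy, hyU, rfl⟩
  refine ⟨x * y * x⁻¹ * y⁻¹, mul_mem (mul_mem (mul_mem hx hy) (inv_mem hx)) (inv_mem hy), ?_,
    (commutatorElement_def _ _).symm⟩
  rintro k (hk | hk) <;> simp [hxT, hyU, hk]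

theorem coordOfTrivialOn_normal (h : H.coordOfTrivialOn ∅ i = ⊤) :
    (H.coordOfTrivialOn T i).Normal where
  conj_mem := by
    simp only [mem_coordOfTrivialOn]
    rintro - ⟨x, hx, hxT, rfl⟩ g
    obtain ⟨y, hy, -, rfl⟩ := mem_coordOfTrivialOn.mp (h ▸ mem_top g)
    exact ⟨y * x * y⁻¹, mul_mem (mul_mem hy hx) (inv_mem hy), fun k hk => by simp [hxT k hk], rfl⟩

theorem coordOfTrivialOn_eq_top (hS : _root_.commutator S = ⊤) (h₀ : H.coordOfTrivialOn ∅ i = ⊤)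
    (h₁ : ∀ j ≠ i, H.coordOfTrivialOn {j} i = ⊤) (hT : T.Finite) (hiT : i ∉ T) :
    H.coordOfTrivialOn T i = ⊤ := by
  induction T, hT using Set.Finite.induction_on with
  | empty => exact h₀
  | @insert j T _ _ ih =>
    rw [Set.mem_insert_iff, not_or] at hiT
    rw [eq_top_iff, ← hS, Set.insert_eq]
    calc _root_.commutator S = ⁅H.coordOfTrivialOn {j} i, H.coordOfTrivialOn T i⁆ := by
          rw [h₁ j (Ne.symm hiT.1), ih hiT.2, _root_.commutator]
      _ ≤ _ := commutator_coordOfTrivialOn_le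

theorem eq_top_of_coordOfTrivialOn_eq_top [Finite ι] (hS : _root_.commutator S = ⊤)
    (h₀ : ∀ i, H.coordOfTrivialOn ∅ i = ⊤) (h₁ : ∀ i, ∀ j ≠ i, H.coordOfTrivialOn {j} i = ⊤) :
    H = ⊤ := by
  classical
  refine eq_top_iff.mpr fun x _ => pi_mem_of_mulSingle_mem x fun i => ?_
  have hi := coordOfTrivialOn_eq_top (T := {i}ᶜ) hS (h₀ i) (h₁ i) (Set.toFinite _) (by simp)
  obtain ⟨y, hy, hyi, hyx⟩ := mem_coordOfTrivialOn.mp (hi ▸ mem_top (x i))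
  convert hy using 1
  funext k
  rcases eq_or_ne k i with rfl | hk
  · simp [hyx]
  · simp [hk, hyi k hk]

end Subgroup

def twistedDiagonal (σ : ι → MulAut S) : S →* (ι → S) :=
  MonoidHom.pi fun i => (σ i).toMonoidHom

@[simp]
theorem twistedDiagonal_apply (σ : ι → MulAut S) (s : S) (i : ι) :
    twistedDiagonal σ s i = σ i s :=
  rfl

theorem twistedDiagonal_injective [Nonempty ι] (σ : ι → MulAut S) :
    Function.Injective (twistedDiagonal σ) :=
  fun _ _ h => (σ (Classical.arbitrary ι)).injective (congrFun h _)

theorem iSup_range_twistedDiagonal_eq_top [Finite ι] {κ : Type*} (hS : IsSimpleGroup S)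
    (hperf : commutator S = ⊤) (σ : κ → ι → MulAut S) (k₀ : κ) (hk₀ : σ k₀ = 1)
    (hsep : ∀ i j, i ≠ j → ∃ k, σ k i ≠ σ k j) :
    ⨆ k, (twistedDiagonal (σ k)).range = ⊤ := by
  set H := ⨆ k, (twistedDiagonal (σ k)).range
  have mem_H (k : κ) (s : S) : twistedDiagonal (σ k) s ∈ H := mem_iSup_of_mem k ⟨s, rfl⟩
  have h₀ (i : ι) : H.coordOfTrivialOn ∅ i = ⊤ := eq_top_iff.mpr fun s _ =>
    mem_coordOfTrivialOn.mpr ⟨_, mem_H k₀ s, by simp, by simp [hk₀]⟩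
  refine eq_top_of_coordOfTrivialOn_eq_top hperf h₀ fun i j hji => ?_
  obtain ⟨k, hk⟩ := hsep i j hji.symm
  obtain ⟨v, hv⟩ := DFunLike.ne_iff.mp hk
  refine (hS.eq_bot_or_eq_top_of_normal _ (coordOfTrivialOn_normal (h₀ i))).resolve_left
    fun hbot => hv ?_
  have hw : σ k i v * (σ k j v)⁻¹ ∈ H.coordOfTrivialOn {j} i :=
    mem_coordOfTrivialOn.mpr ⟨twistedDiagonal (σ k) v * twistedDiagonal (σ k₀) (σ k j v)⁻¹,
      mul_mem (mem_H k v) (mem_H k₀ _), by simp [hk₀], by simp [hk₀]⟩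
  rwa [hbot, mem_bot, mul_inv_eq_one] at hw

theorem exists_embeddings_generating_power_general
    (S : Type) [Group S] [Finite S] (hS : IsSimpleGroup S)
    (hna : ¬∀ a b : S, a * b = b * a)
    (c m : ℕ) (hm : 0 < m)
    (hmc : m ≤ Nat.card (MulAut S) ^ c) :
    ∃ f : Fin (c + 1) → (S →* (Fin m → S)),
      (∀ i, Function.Injective (f i)) ∧ (⨆ i, (f i).range) = ⊤ := by
  have : Nonempty (Fin m) := ⟨⟨0, hm⟩⟩
  obtain ⟨τ⟩ : Nonempty (Fin m ↪ (Fin c → MulAut S)) := by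
    have := Fintype.ofFinite (MulAut S)
    exact Function.Embedding.nonempty_of_card_le (by simpa [Nat.card_eq_fintype_card] using hmc)
  let σ : Fin (c + 1) → Fin m → MulAut S := Fin.cons 1 fun ℓ i => τ i ℓ
  refine ⟨fun k => twistedDiagonal (σ k), fun k => twistedDiagonal_injective _,
    iSup_range_twistedDiagonal_eq_top hS (hS.commutator_eq_top hna) σ 0 rfl fun i j hij => ?_⟩
  obtain ⟨ℓ, hℓ⟩ := Function.ne_iff.mp (τ.injective.ne hij)
  exact ⟨ℓ.succ, by simpa [σ] using hℓ⟩

/-- **Proposition (Kassabov–Nikolov).**  For a nonabelian finite simple group `S` and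
positive integers `c, m` with `m ≤ |Aut(S)|^c`, there exist `c + 1` injective homomorphisms
`f i : S → S^m` whose images together generate `S^m`. -/
theorem exists_embeddings_generating_power
    (S : Type) [Group S] [Finite S] (hS : IsSimpleGroup S)
    (hna : ¬∀ a b : S, a * b = b * a)
    (c m : ℕ) (hc : 0 < c) (hm : 0 < m)
    (hmc : m ≤ Nat.card (MulAut S) ^ c) :
    ∃ f : Fin (c + 1) → (S →* (Fin m → S)),
      (∀ i, Function.Injective (f i)) ∧ (⨆ i, (f i).range) = ⊤ :=
  exists_embeddings_generating_power_general S hS hna c m hm hmc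
end

section
/- Let S be a finite simple group, c ∈ ℕ, and m an integer with m > |S|^c. Then the direct product S^m cannot be generated by c elements. -/
/-!
Pigeonhole on coordinates: if `g₁, …, g_c` generate `S^m`, each coordinate `i` gives the tuple
`(g₁ i, …, g_c i) ∈ S^c`. Were two coordinates `i ≠ j` to give the same tuple, the evaluations at
`i` and `j` would agree on the generators, hence on all of `S^m`, which is false as soon as `S` is
nontrivial. So `m ≤ |S|^c`.
-/

theorem Pi.evalMonoidHom_injective {ι G : Type*} [Monoid G] [Nontrivial G] :
    Function.Injective fun i : ι => Pi.evalMonoidHom (fun _ : ι => G) i := by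
  classical
  intro i j hij
  by_contra hne
  obtain ⟨s, hs⟩ := exists_ne (1 : G)
  have hsingle := DFunLike.congr_fun hij (Pi.mulSingle i s)
  simp [Pi.mulSingle_eq_of_ne' hne, hs] at hsingle

theorem Pi.injective_swap_of_closure_range_eq_top {ι κ G : Type*} [Group G] [Nontrivial G]
    {g : κ → ι → G} (hg : Subgroup.closure (Set.range g) = ⊤) :
    Function.Injective (Function.swap g) := by
  intro i j hij
  apply Pi.evalMonoidHom_injective (G := G)
  refine MonoidHom.eq_of_eqOn_dense hg ?_
  rintro _ ⟨k, rfl⟩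
  exact congrFun hij k

/-- **Proposition (Kassabov–Nikolov).**  For a finite simple group `S`, `c ∈ ℕ` and
`m > |S|^c`, the direct product `S^m` cannot be generated by `c` elements. -/
theorem power_not_generated_by_c_elements
    (S : Type) [Group S] [Finite S] (hS : IsSimpleGroup S)
    (c m : ℕ) (hm : Nat.card S ^ c < m) :
    ∀ g : Fin c → (Fin m → S), Subgroup.closure (Set.range g) ≠ ⊤ := by
  intro g hg
  have hcard := Nat.card_le_card_of_injective _ (Pi.injective_swap_of_closure_range_eq_top hg)
  rw [Nat.card_fun, Nat.card_fin, Nat.card_fin] at hcard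
  omega
end

section
/- Let S be a nonabelian finite simple group, c ∈ ℕ, and m an integer with m > |S|^c / |Aut(S)|. Then the direct product S^m cannot be generated by c elements. -/
/-- **Proposition (Kassabov–Nikolov).**  For a nonabelian finite simple group `S`, `c ∈ ℕ`
and `m > |S|^c / |Aut(S)|`, the direct product `S^m` cannot be generated by `c` elements. -/
theorem power_not_generated_by_c_elements_aut
    (S : Type) [Group S] [Finite S] (hS : IsSimpleGroup S)
    (hna : ¬∀ a b : S, a * b = b * a)
    (c m : ℕ) (hm : (Nat.card S : ℝ) ^ c / (Nat.card (MulAut S) : ℝ) < (m : ℝ)) :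
    ∀ g : Fin c → (Fin m → S), Subgroup.closure (Set.range g) ≠ ⊤ := by
  intro g hg
  haveI : Nontrivial S := hS.toNontrivial
  -- each coordinate projection gives a generating set of S
  have hproj : ∀ i : Fin m, Subgroup.closure (Set.range (fun k => g k i)) = ⊤ := by
    intro i
    have hsurj : Function.Surjective (Pi.evalMonoidHom (fun _ : Fin m => S) i) :=
      Function.surjective_eval i
    have := Subgroup.map_top_of_surjective _ hsurj
    rw [← hg, MonoidHom.map_closure] at this
    rw [← this]
    congr 1
    ext x
    simp [Set.range_comp]
  -- The key injection
  set F : Fin m × MulAut S → (Fin c → S) := fun p => fun k => p.2 (g k p.1) with hF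
  have hinj : Function.Injective F := by
    rintro ⟨i, φ⟩ ⟨j, ψ⟩ h
    simp only [hF] at h
    have hcoord : ∀ k, φ (g k i) = ψ (g k j) := fun k => congrFun h k
    rcases eq_or_ne i j with rfl | hij
    · -- same coordinate: φ = ψ on a generating set
      have : φ = ψ := by
        have heq : (φ : S →* S) = (ψ : S →* S) := by
          have : Set.EqOn (φ : S →* S) (ψ : S →* S)
              (Subgroup.closure (Set.range (fun k => g k i)) : Set S) := by
            apply MonoidHom.eqOn_closure
            rintro x ⟨k, rfl⟩
            exact hcoord k
          ext x
          exact this (by rw [hproj i]; trivial)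
        exact MulEquiv.toMonoidHom_injective heq
      rw [this]
    · -- different coordinates: get a contradiction via the "twisted diagonal"
      exfalso
      set θ : S ≃* S := φ.trans ψ.symm with hθ
      have hθc : ∀ k, θ (g k i) = g k j := by
        intro k
        simp [hθ, hcoord k]
      -- the subgroup where x j = θ (x i)
      let A : (Fin m → S) →* S := Pi.evalMonoidHom (fun _ : Fin m => S) j
      let B : (Fin m → S) →* S :=
        (θ : S →* S).comp (Pi.evalMonoidHom (fun _ : Fin m => S) i)
      have hle : Subgroup.closure (Set.range g) ≤ B.eqLocus A := by
        apply Subgroup.closure_le _ |>.mpr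
        rintro x ⟨k, rfl⟩
        exact hθc k
      rw [hg, top_le_iff] at hle
      obtain ⟨s, hs⟩ := exists_ne (1 : S)
      have hx : (Pi.mulSingle j s : Fin m → S) ∈ B.eqLocus A :=
        hle ▸ Subgroup.mem_top _
      have h2 : B (Pi.mulSingle j s) = A (Pi.mulSingle j s) := hx
      simp only [A, B, MonoidHom.comp_apply, Pi.evalMonoidHom_apply,
        MulEquiv.coe_toMonoidHom, Pi.mulSingle_eq_same,
        Function.update_of_ne hij.symm 1 1, Pi.one_apply] at h2
      rw [Pi.mulSingle_eq_of_ne hij, map_one] at h2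
      exact hs h2.symm
  -- counting
  haveI : Finite (MulAut S) := by
    unfold MulAut
    infer_instance
  have hcard := Nat.card_le_card_of_injective F hinj
  rw [Nat.card_prod, Nat.card_eq_fintype_card (α := Fin m), Fintype.card_fin,
    Nat.card_fun, Nat.card_eq_fintype_card (α := Fin c), Fintype.card_fin] at hcard
  have hpos : (0 : ℝ) < (Nat.card (MulAut S) : ℝ) := by
    exact_mod_cast Nat.card_pos
  rw [div_lt_iff₀ hpos] at hm
  have : ((Nat.card S : ℝ)) ^ c < (Nat.card S : ℝ) ^ c := by
    calc (Nat.card S : ℝ) ^ c < (m : ℝ) * (Nat.card (MulAut S) : ℝ) := hm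
      _ ≤ (Nat.card S : ℝ) ^ c := by exact_mod_cast hcard
  exact lt_irrefl _ this
end

section
/- Fix a prime p. The (possibly non-unital) subring of ∏_{n=3}^∞ M_n(F_p) generated by the three elements a = (a_n)_n, a^{−1} = (a_n^{−1})_n and b = (b_n)_n contains the restricted direct sum ⊕_{n=3}^∞ M_n(F_p) (all elements with only finitely many nonzero coordinates). In particular the ring R contains ⊕_{n=3}^∞ M_n(F_p). -/
/-- The Cartesian product ring `∏_{n ≥ 3} M_n(F_p)` (the `n`-th coordinate, `n ≥ 3`,
being indexed here by `n - 3`). -/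
abbrev BigM (p : ℕ) : Type :=
  ∀ n : ℕ, Matrix (Fin (n + 3)) (Fin (n + 3)) (ZMod p)

/-- `a = (a_n)_n` where `a_n = e_{1,2} + e_{2,3} + ⋯ + e_{n-1,n} + e_{n,1}` is the
permutation matrix of the `n`-cycle. -/
def aElt (p : ℕ) : BigM p :=
  fun n => Matrix.of fun i j => if j = finRotate (n + 3) i then 1 else 0

/-- `a⁻¹ = (a_n⁻¹)_n`, the coordinatewise inverse of `a`, i.e. the permutation matrix of
the inverse cycle in each coordinate. -/
def aInvElt (p : ℕ) : BigM p :=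
  fun n => Matrix.of fun i j => if j = (finRotate (n + 3)).symm i then 1 else 0

/-- `b = (b_n)_n` where `b_n = e_{1,2}` is the matrix unit at position `(1,2)`. -/
def bElt (p : ℕ) : BigM p :=
  fun _ => Matrix.single 0 1 1

/-- `c = (c_n)_n` where `c_n = e_{2,1}` is the matrix unit at position `(2,1)`. -/
def cElt (p : ℕ) : BigM p :=
  fun _ => Matrix.single 1 0 1

/-!
In the coordinate `M_n(F_p)`, `b a^m b = e₁₂ (a_n^m)₂₁ e₁₂` is `e₁₂` when `n ∣ m + 1` and `0`
otherwise, so `b a^(k-1) b` is the sum over the divisors `d` of `k` of `e₁₂` placed in the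
coordinate `M_d`. Inverting this divisor sum (strong induction on `k`) isolates `e₁₂` in a single
coordinate. Multiplying on both sides by positive powers of the cycle `a` (the subring has no `1`)
moves it to any matrix unit `e_ij` of that coordinate, and integer combinations of these give every
element with finite support.
-/

open Matrix Equiv
open Fin.NatCast Fin.CommRing

theorem pow_mem_of_ne_zero {M A : Type*} [Monoid M] [SetLike A M] [MulMemClass A M] {S : A}
    {x : M} (hx : x ∈ S) {m : ℕ} (hm : m ≠ 0) : x ^ m ∈ S := by
  obtain ⟨k, rfl⟩ := Nat.exists_eq_succ_of_ne_zero hm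
  induction k with
  | zero => simpa using hx
  | succ k ih => rw [pow_succ]; exact mul_mem (ih k.succ_ne_zero) hx

section PermMatrix

variable {n R : Type*} [DecidableEq n] [Fintype n] [Semiring R]

theorem permMatrix_pow (σ : Perm n) (m : ℕ) :
    (σ ^ m).permMatrix R = σ.permMatrix R ^ m := by
  induction m with
  | zero => simp
  | succ m ih => rw [pow_succ', permMatrix_mul, ih, pow_succ]

theorem permMatrix_mul_single_mul_permMatrix (σ τ : Perm n) (i j : n) (r : R) :
    σ.permMatrix R * single i j r * τ.permMatrix R = single (σ.symm i) (τ j) r := by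
  rw [PEquiv.toMatrix_toPEquiv_mul, PEquiv.mul_toMatrix_toPEquiv, submatrix_submatrix]
  exact submatrix_single_equiv σ τ.symm i j r

end PermMatrix

theorem finRotate_pow_apply {N : ℕ} [NeZero N] (m : ℕ) (i : Fin N) :
    (finRotate N ^ m) i = i + (m : Fin N) := by
  induction m with
  | zero => simp
  | succ m ih =>
    rw [pow_succ', Perm.mul_apply, finRotate_apply, ih]
    push_cast
    ring

theorem exists_pos_finRotate_pow_apply_eq {N : ℕ} [NeZero N] (x y : Fin N) :
    ∃ m, 0 < m ∧ (finRotate N ^ m) x = y := by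
  refine ⟨(y - x).val + N, by have := NeZero.pos N; omega, ?_⟩
  rw [finRotate_pow_apply]
  push_cast
  rw [Fin.natCast_self]
  ring

section

variable {p : ℕ}

theorem aElt_pow_apply (m n : ℕ) :
    (aElt p ^ m) n = (finRotate (n + 3) ^ m).permMatrix (ZMod p) := by
  rw [Pi.pow_apply, permMatrix_pow]
  congr 1
  ext i j
  simp [aElt, PEquiv.toMatrix_apply, eq_comm]

theorem bElt_mul_aElt_pow_mul_bElt_apply (m n : ℕ) :
    (bElt p * aElt p ^ m * bElt p) n = if n + 3 ∣ m + 1 then single 0 1 1 else 0 := by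
  have hrot : (finRotate (n + 3) ^ m) 1 = ((m + 1 : ℕ) : Fin (n + 3)) := by
    rw [finRotate_pow_apply]
    push_cast
    ring
  simp only [Pi.mul_apply, bElt, aElt_pow_apply, single_mul_mul_single, PEquiv.toMatrix_apply,
    toPEquiv_apply, Option.mem_def, Option.some.injEq, hrot, Fin.natCast_eq_zero]
  split_ifs <;> simp

-- Indexed by the matrix size `d`, not by the coordinate index `d - 3`.
def e12At (p d : ℕ) : BigM p := fun n => if n + 3 = d then single 0 1 1 else 0

theorem bElt_mul_aElt_pow_mul_bElt_eq_sum {k : ℕ} (hk : k ≠ 0) :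
    bElt p * aElt p ^ (k - 1) * bElt p = ∑ d ∈ k.divisors, e12At p d := by
  funext n
  rw [bElt_mul_aElt_pow_mul_bElt_apply, Nat.sub_add_cancel (Nat.one_le_iff_ne_zero.mpr hk),
    Finset.sum_apply]
  simp [e12At, hk]

abbrev abClosure (p : ℕ) : NonUnitalSubring (BigM p) :=
  NonUnitalSubring.closure {aElt p, aInvElt p, bElt p}

theorem aElt_mem_abClosure : aElt p ∈ abClosure p :=
  NonUnitalSubring.subset_closure (by simp)

theorem bElt_mem_abClosure : bElt p ∈ abClosure p :=
  NonUnitalSubring.subset_closure (by simp)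

theorem bElt_mul_aElt_pow_mul_bElt_mem_abClosure (m : ℕ) :
    bElt p * aElt p ^ m * bElt p ∈ abClosure p := by
  rcases eq_or_ne m 0 with rfl | hm
  · rw [pow_zero, mul_one]
    exact mul_mem bElt_mem_abClosure bElt_mem_abClosure
  · exact mul_mem (mul_mem bElt_mem_abClosure (pow_mem_of_ne_zero aElt_mem_abClosure hm))
      bElt_mem_abClosure

theorem e12At_mem_abClosure (k : ℕ) : e12At p k ∈ abClosure p := by
  induction k using Nat.strong_induction_on with
  | _ k ih =>
  rcases eq_or_ne k 0 with rfl | hk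
  · have hzero : e12At p 0 = 0 := funext fun n => if_neg (by omega)
    exact hzero ▸ zero_mem _
  · have hsplit : e12At p k
        = bElt p * aElt p ^ (k - 1) * bElt p - ∑ d ∈ k.properDivisors, e12At p d := by
      rw [bElt_mul_aElt_pow_mul_bElt_eq_sum hk, ← Nat.cons_self_properDivisors hk, Finset.sum_cons,
        add_sub_cancel_right]
    rw [hsplit]
    exact sub_mem (bElt_mul_aElt_pow_mul_bElt_mem_abClosure _)
      (sum_mem fun d hd => ih d (Nat.mem_properDivisors.mp hd).2)

theorem piSingle_single_one_mem_abClosure (n : ℕ) (i j : Fin (n + 3)) :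
    Pi.single n (single i j 1) ∈ abClosure p := by
  obtain ⟨A, hA, hAi⟩ := exists_pos_finRotate_pow_apply_eq i 0
  obtain ⟨B, hB, hBj⟩ := exists_pos_finRotate_pow_apply_eq 1 j
  have hconj : Pi.single n (single i j 1) = aElt p ^ A * e12At p (n + 3) * aElt p ^ B := by
    funext m
    rcases eq_or_ne m n with rfl | hmn
    · have hAi' : (finRotate (m + 3) ^ A).symm 0 = i := (symm_apply_eq _).mpr hAi.symm
      rw [Pi.single_eq_same, Pi.mul_apply, Pi.mul_apply, aElt_pow_apply, aElt_pow_apply, e12At,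
        if_pos rfl, permMatrix_mul_single_mul_permMatrix, hAi', hBj]
    · simp [e12At, hmn]
  rw [hconj]
  exact mul_mem (mul_mem (pow_mem_of_ne_zero aElt_mem_abClosure hA.ne') (e12At_mem_abClosure _))
    (pow_mem_of_ne_zero aElt_mem_abClosure hB.ne')

theorem piSingle_mem_abClosure (n : ℕ) (M : Matrix (Fin (n + 3)) (Fin (n + 3)) (ZMod p)) :
    Pi.single n M ∈ abClosure p := by
  suffices M ∈ (abClosure p).toAddSubgroup.comap
      (AddMonoidHom.single (fun n => Matrix (Fin (n + 3)) (Fin (n + 3)) (ZMod p)) n) from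
    AddSubgroup.mem_comap.mp this
  rw [matrix_eq_sum_single M]
  refine sum_mem fun i _ => sum_mem fun j _ => ?_
  have hscalar : single i j (M i j) = ((M i j).cast : ℤ) • single i j 1 := by
    rw [smul_single, zsmul_one, ZMod.intCast_zmod_cast]
  rw [hscalar]
  exact zsmul_mem (AddSubgroup.mem_comap.mpr (piSingle_single_one_mem_abClosure n i j)) _

theorem mem_abClosure_of_finite {x : BigM p} (hx : {n | x n ≠ 0}.Finite) : x ∈ abClosure p := by
  have hsum : x = ∑ n ∈ hx.toFinset, Pi.single n (x n) := by
    funext m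
    rw [Finset.sum_apply, Finset.sum_pi_single]
    split_ifs with hm
    · rfl
    · simpa using hm
  rw [hsum]
  exact sum_mem fun n _ => piSingle_mem_abClosure n (x n)

theorem abClosure_le_subringClosure :
    abClosure p ≤ (Subring.closure {aElt p, aInvElt p, bElt p, cElt p}).toNonUnitalSubring :=
  NonUnitalSubring.closure_le.mpr fun y hy => Subring.subset_closure (by
    simp only [Set.mem_insert_iff, Set.mem_singleton_iff] at hy ⊢
    tauto)

end

theorem subring_contains_direct_sum_general (p : ℕ) :
    (∀ x : BigM p, {n | x n ≠ 0}.Finite →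
      x ∈ NonUnitalSubring.closure {aElt p, aInvElt p, bElt p}) ∧
    (∀ x : BigM p, {n | x n ≠ 0}.Finite →
      x ∈ Subring.closure {aElt p, aInvElt p, bElt p, cElt p}) :=
  ⟨fun _ hx => mem_abClosure_of_finite hx,
    fun _ hx => abClosure_le_subringClosure (mem_abClosure_of_finite hx)⟩

/-- **Proposition (Kassabov).**  The (possibly non-unital) subring of
`∏_{n ≥ 3} M_n(F_p)` generated by `a`, `a⁻¹` and `b` contains the restricted direct sum
`⊕_{n ≥ 3} M_n(F_p)` (all elements with finitely many nonzero coordinates).  In particular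
the unital subring `R` generated by `1, a, a⁻¹, b, c` contains `⊕_{n ≥ 3} M_n(F_p)`. -/
theorem subring_contains_direct_sum (p : ℕ) (hp : p.Prime) :
    (∀ x : BigM p, {n | x n ≠ 0}.Finite →
      x ∈ NonUnitalSubring.closure {aElt p, aInvElt p, bElt p}) ∧
    (∀ x : BigM p, {n | x n ≠ 0}.Finite →
      x ∈ Subring.closure {aElt p, aInvElt p, bElt p, cElt p}) :=
  subring_contains_direct_sum_general p
end

section
/- Fix a prime p and let R, a, b, c be as defined below. Let I be a two-sided ideal of R and N ≥ 1 an integer with a^N − 1 ∈ I. Then b and c lie in I + ⊕_{n=3}^{N+2} M_n(F_p); consequently, the quotient ring R/(I + ⊕_{n=3}^{N+2} M_n(F_p)) is generated as a unital ring by the image of a, and is therefore a quotient of the group algebra F_p[t, t^{−1}]/(t^N − 1) of the cyclic group of order N. -/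
/-- The ring `R`: the unital subring of `∏_{n ≥ 3} M_n(F_p)` generated by `1, a, a⁻¹, b, c`. -/
def Rring (p : ℕ) : Subring (BigM p) :=
  Subring.closure {aElt p, aInvElt p, bElt p, cElt p}

/-- Membership in the finite direct sum `⊕_{n=3}^{N+2} M_n(F_p)` inside
`∏_{n ≥ 3} M_n(F_p)`: all coordinates of matrix size `> N + 2` (i.e. of index `≥ N` in our
indexing) vanish. -/
def InDSum (p N : ℕ) (y : BigM p) : Prop :=
  ∀ m : ℕ, N ≤ m → y m = 0

section CyclicGroupAlgebra

def powZModHom {M : Type*} [Monoid M] {N : ℕ} [NeZero N] (u : M) (hu : u ^ N = 1) :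
    Multiplicative (ZMod N) →* M where
  toFun x := u ^ x.toAdd.val
  map_one' := by simp
  map_mul' x y := by rw [toAdd_mul, ZMod.val_add, ← pow_eq_pow_mod _ hu, pow_add]

variable {A : Type*} [Ring A]

lemma commute_zmod_ringHom {n : ℕ} (f : ZMod n →+* A) (x : ZMod n) (y : A) :
    Commute (f x) y := by
  rw [← ZMod.intCast_zmod_cast x, map_intCast]
  exact Int.cast_commute _ y

def zmodRingHomOfNatCastEqZero {p : ℕ} (hp : (p : A) = 0) : ZMod p →+* A :=
  (Ideal.Quotient.lift (Ideal.span {(p : ℤ)}) (Int.castRingHom A) fun k hk => by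
      obtain ⟨l, rfl⟩ := Ideal.mem_span_singleton'.mp hk
      simp [hp]).comp
    (Int.quotientSpanNatEquivZMod p).symm.toRingHom

theorem exists_surjective_of_closure_singleton_eq_top {p N : ℕ} [NeZero N]
    (hp : (p : A) = 0) {u : A} (hu : u ^ N = 1) (hgen : Subring.closure {u} = ⊤) :
    ∃ ψ : MonoidAlgebra (ZMod p) (Multiplicative (ZMod N)) →+* A, Function.Surjective ψ := by
  let f := zmodRingHomOfNatCastEqZero hp
  let ψ := MonoidAlgebra.liftNCRingHom f (powZModHom u hu) fun x _ => commute_zmod_ringHom f x _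
  have hu_mem : u ∈ ψ.range := by
    refine ⟨MonoidAlgebra.single (Multiplicative.ofAdd 1) 1, ?_⟩
    rw [MonoidAlgebra.liftNCRingHom_single, map_one, one_mul]
    change u ^ (1 : ZMod N).val = u
    rw [ZMod.val_one_eq_one_mod, ← pow_eq_pow_mod _ hu, pow_one]
  refine ⟨ψ, fun w => ?_⟩
  have : Subring.closure {u} ≤ ψ.range := Subring.closure_le.mpr (by simpa using hu_mem)
  exact this (hgen ▸ Subring.mem_top w)

end CyclicGroupAlgebra

section Congruence

variable {B : Type*} [Ring B]

theorem exists_mem_closure_sub_mem_of_mem_closure {s t : Set B} {J : AddSubgroup B}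
    (ht : t ⊆ Subring.closure s)
    (hJl : ∀ r ∈ Subring.closure s, ∀ x ∈ J, r * x ∈ J)
    (hJr : ∀ r ∈ Subring.closure s, ∀ x ∈ J, x * r ∈ J)
    (hs : ∀ g ∈ s, ∃ q ∈ Subring.closure t, g - q ∈ J) :
    ∀ z ∈ Subring.closure s, ∃ q ∈ Subring.closure t, z - q ∈ J := by
  have hts : Subring.closure t ≤ Subring.closure s := Subring.closure_le.mpr ht
  intro z hz
  induction hz using Subring.closure_induction with
  | mem g hg => exact hs g hg
  | zero => exact ⟨0, zero_mem _, by simp⟩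
  | one => exact ⟨1, one_mem _, by simp⟩
  | add z₁ z₂ _ _ ih₁ ih₂ =>
    obtain ⟨q₁, hq₁, h₁⟩ := ih₁
    obtain ⟨q₂, hq₂, h₂⟩ := ih₂
    exact ⟨q₁ + q₂, add_mem hq₁ hq₂, by simpa [add_sub_add_comm] using add_mem h₁ h₂⟩
  | neg z _ ih =>
    obtain ⟨q, hq, h⟩ := ih
    exact ⟨-q, neg_mem hq, by rw [neg_sub_neg, ← neg_sub]; exact neg_mem h⟩
  | mul z₁ z₂ _ hz₂ ih₁ ih₂ =>
    obtain ⟨q₁, hq₁, h₁⟩ := ih₁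
    obtain ⟨q₂, hq₂, h₂⟩ := ih₂
    refine ⟨q₁ * q₂, mul_mem hq₁ hq₂, ?_⟩
    have : z₁ * z₂ - q₁ * q₂ = (z₁ - q₁) * z₂ + q₁ * (z₂ - q₂) := by noncomm_ring
    rw [this]
    exact add_mem (hJr _ hz₂ _ h₁) (hJl _ (hts hq₁) _ h₂)

lemma AddSubgroup.mul_mem_sup_left {I D : AddSubgroup B} {r x : B}
    (hI : ∀ y ∈ I, r * y ∈ I) (hD : ∀ y ∈ D, r * y ∈ D) (hx : x ∈ I ⊔ D) :
    r * x ∈ I ⊔ D := by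
  obtain ⟨y, hy, d, hd, rfl⟩ := AddSubgroup.mem_sup.mp hx
  rw [mul_add]
  exact AddSubgroup.add_mem_sup (hI y hy) (hD d hd)

lemma AddSubgroup.mul_mem_sup_right {I D : AddSubgroup B} {r x : B}
    (hI : ∀ y ∈ I, y * r ∈ I) (hD : ∀ y ∈ D, y * r ∈ D) (hx : x ∈ I ⊔ D) :
    x * r ∈ I ⊔ D := by
  obtain ⟨y, hy, d, hd, rfl⟩ := AddSubgroup.mem_sup.mp hx
  rw [add_mul]
  exact AddSubgroup.add_mem_sup (hI y hy) (hD d hd)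

lemma RingCon.closure_singleton_mk'_eq_top {R : Type*} [Ring R] (c : RingCon R) (a : R)
    (h : ∀ z, ∃ q ∈ Subring.closure {a}, c z q) :
    Subring.closure {RingCon.mk' c a} = ⊤ := by
  refine eq_top_iff.mpr fun w _ => ?_
  obtain ⟨z, rfl⟩ := RingCon.mk'_surjective c w
  obtain ⟨q, hq, hzq⟩ := h z
  have hzq' : c.mk' z = c.mk' q := (RingCon.eq c).mpr hzq
  rw [hzq', ← Set.image_singleton, ← RingHom.map_closure]
  exact ⟨q, hq, rfl⟩

end Congruence

section Kassabov

variable {p N : ℕ} {I : AddSubgroup (BigM p)}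

/-- `⊕_{n=3}^{N+2} M_n(F_p)` as an additive subgroup of `∏_{n≥3} M_n(F_p)`. -/
def dsum (p N : ℕ) : AddSubgroup (BigM p) where
  carrier := {y | InDSum p N y}
  add_mem' hx hy m hm := by simp [hx m hm, hy m hm]
  zero_mem' _ _ := rfl
  neg_mem' hy m hm := by simp [hy m hm]

lemma mul_mem_dsum_left (x : BigM p) {y : BigM p} (hy : y ∈ dsum p N) :
    x * y ∈ dsum p N := fun m hm => by simp [hy m hm]

lemma mul_mem_dsum_right {x : BigM p} (y : BigM p) (hx : x ∈ dsum p N) :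
    x * y ∈ dsum p N := fun m hm => by simp [hx m hm]

open Fin.NatCast in
lemma aElt_pow_apply_s19 (n k : ℕ) :
    (aElt p ^ k) n = Matrix.of fun i j => if j = i + (k : Fin (n + 3)) then 1 else 0 := by
  induction k with
  | zero => ext i j; simp [Matrix.one_apply, eq_comm]
  | succ k ih =>
    rw [pow_succ, Pi.mul_apply, ih]
    ext i j
    simp only [Matrix.mul_apply, Matrix.of_apply, aElt, ite_mul, one_mul, zero_mul,
      finRotate_apply]
    rw [Finset.sum_ite_eq' Finset.univ (i + (k : Fin (n + 3)))]
    simp [add_assoc]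

lemma aInvElt_mul_aElt : aInvElt p * aElt p = 1 := by
  funext n
  ext i j
  simp only [Pi.mul_apply, Matrix.mul_apply, aInvElt, aElt, Matrix.of_apply, ite_mul, one_mul,
    zero_mul]
  rw [Finset.sum_ite_eq' Finset.univ ((finRotate (n + 3)).symm i)]
  simp [Matrix.one_apply, eq_comm]

open Fin.NatCast in
lemma bElt_mul_aElt_pow_mul_cElt_mem_dsum (hN : 1 ≤ N) :
    bElt p * aElt p ^ N * cElt p ∈ dsum p N := by
  intro m hm
  have hN0 : ((N : ℕ) : Fin (m + 3)) ≠ 0 := by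
    rw [Ne, Fin.natCast_eq_zero]
    exact fun h => absurd (Nat.le_of_dvd (by omega) h) (by omega)
  simp only [Pi.mul_apply, bElt, cElt, aElt_pow_apply_s19, Matrix.single_mul_mul_single]
  simp [hN0]

lemma natCast_bigM_self : (p : BigM p) = 0 := by
  funext n
  simp

lemma mem_sup_dsum_iff {x : BigM p} :
    x ∈ I ⊔ dsum p N ↔ ∃ i ∈ I, ∃ y : BigM p, InDSum p N y ∧ x = i + y := by
  simp only [AddSubgroup.mem_sup, eq_comm (a := x)]
  rfl

lemma aElt_mem_Rring : aElt p ∈ Rring p := Subring.subset_closure (by simp)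

lemma aInvElt_mem_Rring : aInvElt p ∈ Rring p := Subring.subset_closure (by simp)

lemma bElt_mem_Rring : bElt p ∈ Rring p := Subring.subset_closure (by simp)

lemma cElt_mem_Rring : cElt p ∈ Rring p := Subring.subset_closure (by simp)

lemma aInvElt_sub_aElt_pow_mem (hN : 1 ≤ N) (hIl : ∀ r ∈ Rring p, ∀ x ∈ I, r * x ∈ I)
    (haN : aElt p ^ N - 1 ∈ I) : aInvElt p - aElt p ^ (N - 1) ∈ I := by
  have : aInvElt p - aElt p ^ (N - 1) = -(aInvElt p * (aElt p ^ N - 1)) := by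
    obtain ⟨k, rfl⟩ := Nat.exists_eq_add_of_le' hN
    rw [Nat.add_sub_cancel, pow_succ', mul_sub, ← mul_assoc, aInvElt_mul_aElt, one_mul, mul_one,
      neg_sub]
  rw [this]
  exact neg_mem (hIl _ aInvElt_mem_Rring _ haN)

lemma bElt_mul_cElt_mem_sup (hN : 1 ≤ N) (hIl : ∀ r ∈ Rring p, ∀ x ∈ I, r * x ∈ I)
    (hIr : ∀ r ∈ Rring p, ∀ x ∈ I, x * r ∈ I) (haN : aElt p ^ N - 1 ∈ I) :
    bElt p * cElt p ∈ I ⊔ dsum p N := by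
  have : bElt p * cElt p = bElt p * aElt p ^ N * cElt p - bElt p * (aElt p ^ N - 1) * cElt p := by
    noncomm_ring
  rw [this]
  exact sub_mem (AddSubgroup.mem_sup_right (bElt_mul_aElt_pow_mul_cElt_mem_dsum hN))
    (AddSubgroup.mem_sup_left (hIr _ cElt_mem_Rring _ (hIl _ bElt_mem_Rring _ haN)))

lemma bElt_mem_sup (hN : 1 ≤ N) (hIl : ∀ r ∈ Rring p, ∀ x ∈ I, r * x ∈ I)
    (hIr : ∀ r ∈ Rring p, ∀ x ∈ I, x * r ∈ I) (haN : aElt p ^ N - 1 ∈ I) :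
    bElt p ∈ I ⊔ dsum p N := by
  have : bElt p * cElt p * bElt p = bElt p := by funext; simp [bElt, cElt]
  rw [← this]
  exact AddSubgroup.mul_mem_sup_right (hIr _ bElt_mem_Rring) (fun _ => mul_mem_dsum_right _)
    (bElt_mul_cElt_mem_sup hN hIl hIr haN)

lemma cElt_mem_sup (hN : 1 ≤ N) (hIl : ∀ r ∈ Rring p, ∀ x ∈ I, r * x ∈ I)
    (hIr : ∀ r ∈ Rring p, ∀ x ∈ I, x * r ∈ I) (haN : aElt p ^ N - 1 ∈ I) :
    cElt p ∈ I ⊔ dsum p N := by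
  have : cElt p * (bElt p * cElt p) = cElt p := by funext; simp [bElt, cElt]
  rw [← this]
  exact AddSubgroup.mul_mem_sup_left (hIl _ cElt_mem_Rring) (fun _ => mul_mem_dsum_left _)
    (bElt_mul_cElt_mem_sup hN hIl hIr haN)

theorem exists_mem_closure_aElt_sub_mem_sup (hN : 1 ≤ N)
    (hIl : ∀ r ∈ Rring p, ∀ x ∈ I, r * x ∈ I) (hIr : ∀ r ∈ Rring p, ∀ x ∈ I, x * r ∈ I)
    (haN : aElt p ^ N - 1 ∈ I) :
    ∀ z ∈ Rring p, ∃ q ∈ Subring.closure {aElt p}, z - q ∈ I ⊔ dsum p N := by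
  have ha : aElt p ∈ Subring.closure {aElt p} := Subring.subset_closure rfl
  refine exists_mem_closure_sub_mem_of_mem_closure (Set.singleton_subset_iff.mpr aElt_mem_Rring)
    (fun r hr _ => AddSubgroup.mul_mem_sup_left (hIl r hr) fun _ => mul_mem_dsum_left r)
    (fun r hr _ => AddSubgroup.mul_mem_sup_right (hIr r hr) fun _ => mul_mem_dsum_right r) ?_
  rintro g (rfl | rfl | rfl | rfl)
  · exact ⟨aElt p, ha, by simp⟩
  · exact ⟨aElt p ^ (N - 1), pow_mem ha _,
      AddSubgroup.mem_sup_left (aInvElt_sub_aElt_pow_mem hN hIl haN)⟩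
  · exact ⟨0, zero_mem _, by simpa using bElt_mem_sup hN hIl hIr haN⟩
  · exact ⟨0, zero_mem _, by simpa using cElt_mem_sup hN hIl hIr haN⟩

end Kassabov

theorem quotient_by_ideal_containing_aN_is_cyclic_group_algebra_quotient_general
    (p : ℕ) (N : ℕ) (hN : 1 ≤ N)
    (I : AddSubgroup (BigM p))
    (hIl : ∀ r ∈ Rring p, ∀ x ∈ I, r * x ∈ I)
    (hIr : ∀ r ∈ Rring p, ∀ x ∈ I, x * r ∈ I)
    (haN : aElt p ^ N - 1 ∈ I) :
    (∃ x ∈ I, ∃ y : BigM p, InDSum p N y ∧ bElt p = x + y) ∧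
    (∃ x ∈ I, ∃ y : BigM p, InDSum p N y ∧ cElt p = x + y) ∧
    (∀ z ∈ Rring p, ∃ q ∈ Subring.closure {aElt p}, ∃ x ∈ I,
      ∃ y : BigM p, InDSum p N y ∧ z = q + x + y) ∧
    (∀ s : RingCon (Rring p),
      (∀ u v : Rring p, s u v ↔
        ∃ x ∈ I, ∃ y : BigM p, InDSum p N y ∧ (u : BigM p) - (v : BigM p) = x + y) →
      ∃ ψ : MonoidAlgebra (ZMod p) (Multiplicative (ZMod N)) →+* s.Quotient,
        Function.Surjective ψ) := by
  have hred := exists_mem_closure_aElt_sub_mem_sup hN hIl hIr haN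
  refine ⟨mem_sup_dsum_iff.mp (bElt_mem_sup hN hIl hIr haN),
    mem_sup_dsum_iff.mp (cElt_mem_sup hN hIl hIr haN), fun z hz => ?_, fun s hs => ?_⟩
  · obtain ⟨q, hq, hzq⟩ := hred z hz
    obtain ⟨x, hx, y, hy, h⟩ := mem_sup_dsum_iff.mp hzq
    exact ⟨q, hq, x, hx, y, hy, by rw [add_assoc, ← h, add_sub_cancel]⟩
  have hs' : ∀ u v : Rring p, (u : BigM p) - v ∈ I ⊔ dsum p N → s.mk' u = s.mk' v :=
    fun u v h => (RingCon.eq s).mpr ((hs u v).mpr (mem_sup_dsum_iff.mp h))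
  have : NeZero N := ⟨by omega⟩
  let aR : Rring p := ⟨aElt p, aElt_mem_Rring⟩
  refine exists_surjective_of_closure_singleton_eq_top (u := s.mk' aR) ?_ ?_ ?_
  · rw [← map_natCast s.mk', show (p : Rring p) = 0 from Subtype.ext natCast_bigM_self, map_zero]
  · rw [← map_pow, ← map_one s.mk']
    exact hs' _ _ (AddSubgroup.mem_sup_left haN)
  · refine RingCon.closure_singleton_mk'_eq_top s aR fun z => ?_
    obtain ⟨q, hq, hzq⟩ := hred z z.2
    have : q ∈ (Subring.closure {aR}).map (Rring p).subtype := by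
      rwa [RingHom.map_closure, Set.image_singleton]
    obtain ⟨q', hq', rfl⟩ := this
    exact ⟨q', hq', (RingCon.eq s).mp (hs' z q' hzq)⟩

/-- **Lemma (Kassabov).**  Let `I` be a two-sided ideal of `R` and `N ≥ 1` with
`a^N - 1 ∈ I`.  Then `b, c ∈ J := I + ⊕_{n=3}^{N+2} M_n(F_p)`; consequently every element
of `R` is congruent modulo `J` to an element of the unital subring generated by `a`
(i.e. `R/J` is generated as a unital ring by the image of `a`), and therefore the quotient
ring `R/J` (realized as the quotient of `R` by the ring congruence `s` with `s u v ↔ u - v ∈ J`)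
is a quotient of the group algebra `F_p[t,t⁻¹]/(t^N - 1) = F_p[C_N]` of the cyclic group
of order `N`. -/
theorem quotient_by_ideal_containing_aN_is_cyclic_group_algebra_quotient
    (p : ℕ) (hp : p.Prime) (N : ℕ) (hN : 1 ≤ N)
    (I : AddSubgroup (BigM p))
    (hIR : ∀ x ∈ I, x ∈ Rring p)
    (hIl : ∀ r ∈ Rring p, ∀ x ∈ I, r * x ∈ I)
    (hIr : ∀ r ∈ Rring p, ∀ x ∈ I, x * r ∈ I)
    (haN : aElt p ^ N - 1 ∈ I) :
    (∃ x ∈ I, ∃ y : BigM p, InDSum p N y ∧ bElt p = x + y) ∧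
    (∃ x ∈ I, ∃ y : BigM p, InDSum p N y ∧ cElt p = x + y) ∧
    (∀ z ∈ Rring p, ∃ q ∈ Subring.closure {aElt p}, ∃ x ∈ I,
      ∃ y : BigM p, InDSum p N y ∧ z = q + x + y) ∧
    (∀ s : RingCon (Rring p),
      (∀ u v : Rring p, s u v ↔
        ∃ x ∈ I, ∃ y : BigM p, InDSum p N y ∧ (u : BigM p) - (v : BigM p) = x + y) →
      ∃ ψ : MonoidAlgebra (ZMod p) (Multiplicative (ZMod N)) →+* s.Quotient,
        Function.Surjective ψ) :=
  quotient_by_ideal_containing_aN_is_cyclic_group_algebra_quotient_general p N hN I hIl hIr haN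
end
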